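/- arXiv:1206.6625 — 2 statements merged into one kernel-verified Lean document; each statement's English description precedes it below -/
import Mathlib

section
/- Let (X, μ) be a G-equivariant object in C (μᵍ : ρᵍ(X) → X isomorphisms with μᵍ ∘ ρᵍ(μʰ) = μ^{gh} ∘ (ρ₂^{g,h})_X), let Y be simple with inertia group G_Y, chosen isomorphisms cᵍ : ρᵍ(Y) → Y and associated cocycle α̃_Y. Then π(g)(f) := μᵍ ∘ ρᵍ(f) ∘ (cᵍ)⁻¹ defines a projective representation of G_Y on the vector space Hom_C(Y, X) with factor set α̃_Y, i.e. π(g)π(h) = α̃_Y(g,h) π(gh). -/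
/-!
Naturality of `ρ₂` and the equivariance condition on `μ` give `π g ∘ π h = π (g h) ∘ θ` for the
automorphism `θ = c^{gh} ∘ (ρ₂^{g,h})_Y ∘ ρᵍ(cʰ)⁻¹ ∘ (cᵍ)⁻¹` of `Y`, and `α̃_Y` is defined so that
`θ = α̃_Y(g,h) • id`.
-/

open CategoryTheory

theorem CategoryTheory.Iso.hom_eq_smul_id_of_inv_eq_smul_id {k : Type*} [Semiring k]
    {C : Type*} [Category C] [Preadditive C] [Linear k C] {Y : C} (e : Y ≅ Y) (u : kˣ)
    (h : e.inv = ((u⁻¹ : kˣ) : k) • 𝟙 Y) : e.hom = (u : k) • 𝟙 Y :=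
  calc e.hom = ((u : k) * ((u⁻¹ : kˣ) : k)) • (e.hom ≫ 𝟙 Y) := by simp
    _ = (u : k) • (e.hom ≫ e.inv) := by rw [h, Linear.comp_smul, smul_smul]
    _ = (u : k) • 𝟙 Y := by rw [e.hom_inv_id]

namespace EquivariantObject

variable {C : Type*} [Category C] {G : Type*} [Group G]
  (ρ : G → C ⥤ C) (ρ₂ : ∀ a b : G, ρ b ⋙ ρ a ≅ ρ (a * b))
  {X : C} (μ : ∀ g : G, (ρ g).obj X ≅ X) {Y : C} (c : ∀ g : G, (ρ g).obj Y ≅ Y)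

/-- `π g f = μᵍ ∘ ρᵍ(f) ∘ (cᵍ)⁻¹`. -/
def homAction (g : G) (f : Y ⟶ X) : Y ⟶ X :=
  (c g).inv ≫ (ρ g).map f ≫ (μ g).hom

@[simps!]
def cocycleIso (g h : G) : Y ≅ Y :=
  (c g).symm ≪≫ (ρ g).mapIso (c h).symm ≪≫ (ρ₂ g h).app Y ≪≫ c (g * h)

theorem homAction_homAction
    (hμ : ∀ g h : G,
      (ρ g).map ((μ h).hom) ≫ (μ g).hom = (ρ₂ g h).hom.app X ≫ (μ (g * h)).hom)
    (g h : G) (f : Y ⟶ X) :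
    homAction ρ μ c g (homAction ρ μ c h f) =
      (cocycleIso ρ ρ₂ c g h).hom ≫ homAction ρ μ c (g * h) f := by
  have hnat := (ρ₂ g h).hom.naturality f
  simp only [Functor.comp_map] at hnat
  simp only [homAction, cocycleIso_hom, Functor.map_comp, Category.assoc, hμ,
    reassoc_of% hnat, Iso.hom_inv_id_assoc]

end EquivariantObject

/-- Let `(X, μ)` be a `G`-equivariant object and `Y` a simple object fixed up
to isomorphism by all of `G` (playing the role of its inertia subgroup `G_Y`), with chosen
isomorphisms `c g : ρ g (Y) ≅ Y` and associated cocycle `α̃_Y`. Then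
`π g f := μ g ∘ ρ g (f) ∘ (c g)⁻¹` defines a projective representation of `G_Y` on
`Hom_C(Y, X)` with factor set `α̃_Y`, i.e. `π g (π h f) = α̃_Y g h • π (gh) f`. -/
theorem hom_space_projective_representation
    {k : Type*} [Field k] {C : Type*} [Category C] [Preadditive C] [Linear k C]
    {G : Type*} [Group G]
    (ρ : G → C ⥤ C) (ρ₂ : ∀ a b : G, ρ b ⋙ ρ a ≅ ρ (a * b))
    (X : C) (μ : ∀ g : G, (ρ g).obj X ≅ X)
    (hμ : ∀ g h : G,
      (ρ g).map ((μ h).hom) ≫ (μ g).hom = (ρ₂ g h).hom.app X ≫ (μ (g * h)).hom)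
    (Y : C)
    (c : ∀ g : G, (ρ g).obj Y ≅ Y)
    (α : G → G → kˣ)
    (hα : ∀ g h : G, ((((α g h)⁻¹ : kˣ) : k)) • 𝟙 Y =
      (c (g * h)).inv ≫ (ρ₂ g h).inv.app Y ≫ (ρ g).map ((c h).hom) ≫ (c g).hom) :
    ∀ (g h : G) (f : Y ⟶ X),
      (c g).inv ≫ (ρ g).map ((c h).inv ≫ (ρ h).map f ≫ (μ h).hom) ≫ (μ g).hom =
        ((α g h : k)) • ((c (g * h)).inv ≫ (ρ (g * h)).map f ≫ (μ (g * h)).hom) := by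
  intro g h f
  have hcocycle : (EquivariantObject.cocycleIso ρ ρ₂ c g h).hom = (α g h : k) • 𝟙 Y :=
    Iso.hom_eq_smul_id_of_inv_eq_smul_id _ (α g h) <| by
      rw [hα, EquivariantObject.cocycleIso_inv]
  have hcomp := EquivariantObject.homAction_homAction ρ ρ₂ μ c hμ g h f
  rwa [hcocycle, Linear.smul_comp, Category.id_comp] at hcomp
end

section
/- Let G be a finite group with a 3-cocycle ω : G × G × G → kˣ, and define γ(g,h;x) = ω(g,h,x)·ω(ghx h⁻¹g⁻¹, g, h)/ω(g, hxh⁻¹, h). Then for each x ∈ G, the map (g,h) ↦ γ(g,h;x) is a 2-cocycle on the centralizer Z(x) = {g ∈ G : gx = xg}. -/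
/-!
For `g, h` in the centralizer of `x` all the conjugates in `γ(g,h;x)` collapse to `x`, leaving
`ω(g,h,x) ω(x,g,h) / ω(g,x,h)`. The 2-cocycle identity for this expression is the product of the
3-cocycle identity evaluated with `x` inserted in each of four positions, `(g,h,l,x)`,
`(g,h,x,l)`, `(g,x,h,l)` and `(x,g,h,l)`, after commuting `x` past `g`, `h`, `l`.
-/

section

variable {G M : Type*} [Group G] [CommGroup M]

def IsThreeCocycle (ω : G → G → G → M) : Prop :=
  ∀ g h l m : G, ω g h l * ω g (h * l) m * ω h l m = ω (g * h) l m * ω g h (l * m)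

def slant (ω : G → G → G → M) (x g h : G) : M :=
  ω g h x * ω x g h / ω g x h

open Additive in
theorem IsThreeCocycle.slant_cocycle {ω : G → G → G → M} (hω : IsThreeCocycle ω) {x g h l : G}
    (hg : Commute x g) (hh : Commute x h) (hl : Commute x l) :
    slant ω x g h * slant ω x (g * h) l = slant ω x g (h * l) * slant ω x h l := by
  have E₁ := congrArg ofMul (hω g h l x)
  have E₂ := congrArg ofMul (hω g h x l)
  have E₃ := congrArg ofMul (hω g x h l)
  have E₄ := congrArg ofMul (hω x g h l)
  rw [← hh.eq, hl.eq] at E₂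
  rw [← hg.eq] at E₃
  simp only [ofMul_mul] at E₁ E₂ E₃ E₄
  apply ofMul.injective
  simp only [slant, ofMul_mul, ofMul_div]
  linear_combination (norm := abel) E₂ + E₄ - E₁ - E₃

end

theorem gamma_is_cocycle_on_centralizer_general
    {k : Type*} [Field k] {G : Type*} [Group G]
    (ω : G → G → G → kˣ)
    (hcoc : ∀ g h l m : G,
      ω g h l * ω g (h * l) m * ω h l m = ω (g * h) l m * ω g h (l * m))
    (γ : G → G → G → kˣ)
    (hγ : ∀ g h x : G,
      γ g h x = ω g h x * ω (g * h * x * h⁻¹ * g⁻¹) g h / ω g (h * x * h⁻¹) h) :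
    ∀ x : G, ∀ g ∈ Subgroup.centralizer {x}, ∀ h ∈ Subgroup.centralizer {x},
      ∀ l ∈ Subgroup.centralizer {x},
        γ g h x * γ (g * h) l x = γ g (h * l) x * γ h l x := by
  intro x g hg h hh l hl
  rw [Subgroup.mem_centralizer_singleton_iff] at hg hh hl
  have hγ_slant {a b : G} (ha : Commute a x) (hb : Commute b x) : γ a b x = slant ω x a b := by
    have hab : a * b * x * b⁻¹ * a⁻¹ = x := by
      simpa [mul_assoc] using (ha.mul_left hb).mul_inv_cancel
    rw [hγ, hab, hb.mul_inv_cancel, slant]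
  have hgh : Commute (g * h) x := Commute.mul_left hg hh
  have hhl : Commute (h * l) x := Commute.mul_left hh hl
  rw [hγ_slant hg hh, hγ_slant hgh hl, hγ_slant hg hhl, hγ_slant hh hl]
  exact IsThreeCocycle.slant_cocycle hcoc hg.symm hh.symm hl.symm

/-- Let `ω` be a normalized 3-cocycle on a finite group `G` valued in `kˣ` and
define `γ(g,h;x) = ω(g,h,x) ω(ghxh⁻¹g⁻¹, g, h) / ω(g, hxh⁻¹, h)`. Then for every `x ∈ G` the
map `(g,h) ↦ γ(g,h;x)` is a 2-cocycle on the centralizer `Z(x)`. -/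
theorem gamma_is_cocycle_on_centralizer
    {k : Type*} [Field k] {G : Type*} [Group G] [Finite G]
    (ω : G → G → G → kˣ)
    (hcoc : ∀ g h l m : G,
      ω g h l * ω g (h * l) m * ω h l m = ω (g * h) l m * ω g h (l * m))
    (hnorm : ∀ g h : G, ω 1 g h = 1 ∧ ω g 1 h = 1 ∧ ω g h 1 = 1)
    (γ : G → G → G → kˣ)
    (hγ : ∀ g h x : G,
      γ g h x = ω g h x * ω (g * h * x * h⁻¹ * g⁻¹) g h / ω g (h * x * h⁻¹) h) :
    ∀ x : G, ∀ g ∈ Subgroup.centralizer {x}, ∀ h ∈ Subgroup.centralizer {x},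
      ∀ l ∈ Subgroup.centralizer {x},
        γ g h x * γ (g * h) l x = γ g (h * l) x * γ h l x :=
  gamma_is_cocycle_on_centralizer_general ω hcoc γ hγ
end
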